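/- In the semi-free group Γ_{KG(4,2)}, consider the element g = x_{4,1} · x_{1,3} · x_{2,1} · x_{1,4} · x_{3,1} · x_{1,2} (which equals {1,4}^{-1}{1,3}{1,2}^{-1}{1,4}{1,3}^{-1}{1,2}, arising from a 9-cycle colored 2,1,2,3,1,3,4,1,4). Then g ≠ ε in Γ_{KG(4,2)}, but the image of g under the natural map to the abelianization of Γ_{KG(4,2)} is the identity. -/

import Mathlib

/-- The semi-free group (right-angled Artin group) of a simple graph `H`:
generators are the vertices of `H`, with relations `x*y = y*x` for each edge `xy`. -/
def semifreeRels {V : Type} (H : SimpleGraph V) : Set (FreeGroup V) :=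
  {r | ∃ x y : V, H.Adj x y ∧
    r = FreeGroup.of x * FreeGroup.of y * (FreeGroup.of x)⁻¹ * (FreeGroup.of y)⁻¹}

/-- The semi-free group `Γ_H` of a simple graph `H`. -/
abbrev SemifreeGroup {V : Type} (H : SimpleGraph V) : Type :=
  PresentedGroup (semifreeRels H)

/-- The Kneser graph `KG(m,2)`: vertices are the 2-element subsets of `[m]`
(modelled as `Fin m`), adjacent iff disjoint. -/
def kneser (m : ℕ) : SimpleGraph {s : Finset (Fin m) // s.card = 2} where
  Adj s t := Disjoint s.1 t.1
  symm := ⟨fun _ _ h => h.symm⟩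
  loopless := ⟨fun s h => by
    have hs : s.1 = ∅ := disjoint_self.mp h
    have := s.2
    rw [hs] at this
    simp at this⟩

/-- The element `x_{i,j}` of the semi-free group `Γ_{KG(m,2)}`: the identity if `i = j`,
the generator `{i,j}` if `i < j`, and its inverse if `j < i`. -/
def xgen (m : ℕ) (i j : Fin m) : SemifreeGroup (kneser m) :=
  if h : i = j then 1
  else if i < j then PresentedGroup.of ⟨({i, j} : Finset (Fin m)), Finset.card_pair h⟩
  else (PresentedGroup.of ⟨({i, j} : Finset (Fin m)), Finset.card_pair h⟩)⁻¹

/-!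
With `a = {1,4}`, `b = {1,3}`, `c = {1,2}` we have `g = a⁻¹ b c⁻¹ a b⁻¹ c = ⁅a⁻¹, b c⁻¹⁆ ⁅b, c⁻¹⁆`,
a product of commutators, so `g` dies in the abelianization.

In `KG(4,2)` a pair is adjacent only to its complement, so sending each pair to a permutation
that depends only on the perfect matching of `[4]` containing it defines a homomorphism
`Γ_{KG(4,2)} → S₃`. Sending the matching of `a` to `1` and those of `b` and `c` to two
different transpositions maps `g` to the commutator of two non-commuting transpositions.
-/

open scoped commutatorElement

namespace SemifreeGroup

variable {V : Type} {H : SimpleGraph V} {G : Type*} [Group G]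

def lift (f : V → G) (hf : ∀ x y, H.Adj x y → Commute (f x) (f y)) : SemifreeGroup H →* G :=
  PresentedGroup.toGroup (f := f) <| by
    rintro _ ⟨x, y, hxy, rfl⟩
    simp [(hf x y hxy).eq]

@[simp]
theorem lift_of (f : V → G) (hf : ∀ x y, H.Adj x y → Commute (f x) (f y)) (x : V) :
    lift f hf (PresentedGroup.of x) = f x :=
  PresentedGroup.toGroup.of _

end SemifreeGroup

theorem xgen_of_lt {m : ℕ} {i j : Fin m} (h : i < j) :
    xgen m i j = PresentedGroup.of ⟨{i, j}, Finset.card_pair h.ne⟩ := by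
  rw [xgen, dif_neg h.ne, if_pos h]

theorem xgen_of_gt {m : ℕ} {i j : Fin m} (h : j < i) :
    xgen m i j = (PresentedGroup.of ⟨{j, i}, Finset.card_pair h.ne⟩)⁻¹ := by
  rw [xgen, dif_neg h.ne', if_neg h.not_gt]
  congr 2
  exact Subtype.ext (Finset.pair_comm i j)

theorem xgen_swap (m : ℕ) (i j : Fin m) : xgen m j i = (xgen m i j)⁻¹ := by
  rcases lt_trichotomy i j with h | rfl | h
  · rw [xgen_of_gt h, xgen_of_lt h]
  · simp [xgen]
  · rw [xgen_of_gt h, xgen_of_lt h, inv_inv]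

theorem xgen_word_eq_commutator_mul_commutator :
    xgen 4 3 0 * xgen 4 0 2 * xgen 4 1 0 * xgen 4 0 3 * xgen 4 2 0 * xgen 4 0 1 =
      ⁅(xgen 4 0 3)⁻¹, xgen 4 0 2 * (xgen 4 0 1)⁻¹⁆ * ⁅xgen 4 0 2, (xgen 4 0 1)⁻¹⁆ := by
  rw [xgen_swap 4 0 3, xgen_swap 4 0 1, xgen_swap 4 0 2]
  simp only [commutatorElement_def]
  group

def matchingPerm (s : {s : Finset (Fin 4) // s.card = 2}) : Equiv.Perm (Fin 3) :=
  if s.1 = {0, 2} ∨ s.1 = {1, 3} then Equiv.swap 1 2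
  else if s.1 = {0, 1} ∨ s.1 = {2, 3} then Equiv.swap 0 1
  else 1

theorem matchingPerm_eq_of_adj :
    ∀ s t, (kneser 4).Adj s t → matchingPerm s = matchingPerm t := by
  unfold kneser
  decide

def matchingHom : SemifreeGroup (kneser 4) →* Equiv.Perm (Fin 3) :=
  SemifreeGroup.lift matchingPerm fun s t h => matchingPerm_eq_of_adj s t h ▸ Commute.refl _

-- `[4] = {1,2,3,4}` is modelled by `Fin 4 = {0,1,2,3}`, color `i+1` corresponding to `(i : Fin 4)`.
/-- The element `g = x_{4,1} x_{1,3} x_{2,1} x_{1,4} x_{3,1} x_{1,2}` of `Γ_{KG(4,2)}`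
(here `[4] = {1,2,3,4}` is modelled by `Fin 4 = {0,1,2,3}`, with color `i+1`
corresponding to `(i : Fin 4)`) is nontrivial, but its image in the abelianization
of `Γ_{KG(4,2)}` is the identity. -/
theorem nontrivial_but_trivial_in_abelianization :
    (xgen 4 3 0 * xgen 4 0 2 * xgen 4 1 0 * xgen 4 0 3 * xgen 4 2 0 * xgen 4 0 1 ≠ 1) ∧
    Abelianization.of
      (xgen 4 3 0 * xgen 4 0 2 * xgen 4 1 0 * xgen 4 0 3 * xgen 4 2 0 * xgen 4 0 1) = 1 := by
  rw [xgen_word_eq_commutator_mul_commutator]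
  constructor
  · intro h
    have h_image := congrArg matchingHom h
    simp (disch := decide) only [map_mul, map_inv, map_one, map_commutatorElement, matchingHom,
      SemifreeGroup.lift_of, xgen_of_lt] at h_image
    exact absurd h_image (by decide)
  · rw [← MonoidHom.mem_ker, Abelianization.ker_of]
    exact mul_mem (Subgroup.commutator_mem_commutator trivial trivial)
      (Subgroup.commutator_mem_commutator trivial trivial)
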